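/- arXiv:2212.00559 — 5 statements merged into one kernel-verified Lean document; each statement's English description precedes it below -/
import Mathlib

section
/- Let V be a real inner product space of finite dimension n ≥ 4, and let W be an algebraic Weyl tensor on V, i.e. a (0,4)-tensor with the symmetries of a curvature tensor (antisymmetry in the first and last pairs, pair-interchange symmetry, first Bianchi identity) that is totally trace-free. If there exists a nonzero vector v ∈ V with W(x,y,v,z) = 0 for all x,y,z ∈ V, and n = 4, then W = 0. -/
open RealInnerProductSpace

/-!
Choose an orthonormal basis `e₀, …, e₃` with `e₃` proportional to `v`. Then `W` vanishes as soon
as one argument is `e₃`, so it is determined by a tensor `R` on the three-dimensional span of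
`e₀, e₁, e₂` which has the symmetries of a curvature tensor and zero Ricci contraction. In three
dimensions the Ricci contraction is injective: its diagonal entries are sums of two of the three
sectional components `R(eᵢ, eⱼ, eᵢ, eⱼ)`, which they therefore determine, and each off-diagonal
entry is a single component `R(eₖ, eᵢ, eⱼ, eₖ)`. Every component with `i ≠ j`, `k ≠ l` is of
one of these two kinds up to sign, since the pairs `{i, j}` and `{k, l}` must meet.
-/

theorem exists_orthonormalBasis_apply_eq {𝕜 E ι : Type*} [RCLike 𝕜] [NormedAddCommGroup E]
    [InnerProductSpace 𝕜 E] [FiniteDimensional 𝕜 E] [Fintype ι]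
    (hcard : Module.finrank 𝕜 E = Fintype.card ι) (i : ι) {u : E} (hu : ‖u‖ = 1) :
    ∃ b : OrthonormalBasis ι 𝕜 E, b i = u := by
  have hsingle : Orthonormal 𝕜 (({i} : Set ι).domRestrict fun _ => u) :=
    orthonormal_subsingleton_iff.mpr fun _ => hu
  obtain ⟨b, hb⟩ := hsingle.exists_orthonormalBasis_extension_of_card_eq hcard
  exact ⟨b, hb i rfl⟩

/-- This is where the dimension enters: the analogue for `Fin 4` fails,
e.g. for `K 0 1 = K 2 3 = 1`, `K 0 2 = K 1 3 = -1`, `K 0 3 = K 1 2 = 0`. -/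
theorem fin_three_eq_zero_of_symm_of_sum_eq_zero {K : Fin 3 → Fin 3 → ℝ}
    (hsymm : ∀ i j, K i j = K j i) (hdiag : ∀ i, K i i = 0) (hsum : ∀ i, ∑ j, K i j = 0)
    (i j : Fin 3) : K i j = 0 := by
  have h₀ := hsum 0
  have h₁ := hsum 1
  have h₂ := hsum 2
  simp only [Fin.sum_univ_three, hdiag] at h₀ h₁ h₂
  fin_cases i <;> fin_cases j <;> simp only [Fin.zero_eta, Fin.mk_one, Fin.reduceFinMk, hdiag] <;>
    linarith [hsymm 0 1, hsymm 0 2, hsymm 1 2]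

section

variable {M : Type*} [AddCommGroup M] [Module ℝ M]

structure IsSkewPairSymmetric (W : M →ₗ[ℝ] M →ₗ[ℝ] M →ₗ[ℝ] M →ₗ[ℝ] ℝ) : Prop where
  skew_left : ∀ x y z w, W x y z w = -W y x z w
  skew_right : ∀ x y z w, W x y z w = -W x y w z
  pair_symm : ∀ x y z w, W x y z w = W z w x y

namespace IsSkewPairSymmetric

variable {W : M →ₗ[ℝ] M →ₗ[ℝ] M →ₗ[ℝ] M →ₗ[ℝ] ℝ}

theorem apply_self_left (hW : IsSkewPairSymmetric W) (x z w : M) : W x x z w = 0 := by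
  linarith [hW.skew_left x x z w]

theorem apply_self_right (hW : IsSkewPairSymmetric W) (x y z : M) : W x y z z = 0 := by
  linarith [hW.skew_right x y z z]

theorem apply_first_eq_zero (hW : IsSkewPairSymmetric W) {u : M}
    (hu : ∀ x y z, W x y u z = 0) (y z w : M) : W u y z w = 0 := by
  rw [hW.pair_symm, hu]

theorem apply_fourth_eq_zero (hW : IsSkewPairSymmetric W) {u : M}
    (hu : ∀ x y z, W x y u z = 0) (x y z : M) : W x y z u = 0 := by
  rw [hW.skew_right, hu, neg_zero]

theorem apply_second_eq_zero (hW : IsSkewPairSymmetric W) {u : M}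
    (hu : ∀ x y z, W x y u z = 0) (x z w : M) : W x u z w = 0 := by
  rw [hW.skew_left, hW.apply_first_eq_zero hu, neg_zero]

theorem eq_zero_of_apply_castSucc {n : ℕ} (hW : IsSkewPairSymmetric W)
    (b : Module.Basis (Fin (n + 1)) ℝ M)
    (hlast : ∀ x y z, W x y (b (Fin.last n)) z = 0)
    (hcast : ∀ i j k l : Fin n,
      W (b i.castSucc) (b j.castSucc) (b k.castSucc) (b l.castSucc) = 0) :
    W = 0 := by
  refine b.ext fun i => b.ext fun j => b.ext fun k => b.ext fun l => ?_
  simp only [LinearMap.zero_apply]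
  induction i using Fin.lastCases with
  | last => exact hW.apply_first_eq_zero hlast _ _ _
  | cast i =>
    induction j using Fin.lastCases with
    | last => exact hW.apply_second_eq_zero hlast _ _ _
    | cast j =>
      induction k using Fin.lastCases with
      | last => exact hlast _ _ _
      | cast k =>
        induction l using Fin.lastCases with
        | last => exact hW.apply_fourth_eq_zero hlast _ _ _
        | cast l => exact hcast i j k l

theorem ricci_component_eq_zero (hW : IsSkewPairSymmetric W) {e : Fin 3 → M}
    (hric : ∀ j k, ∑ i, W (e i) (e j) (e k) (e i) = 0) (a b c : Fin 3) :
    W (e c) (e a) (e b) (e c) = 0 := by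
  have hsec : ∀ a c, W (e a) (e c) (e a) (e c) = 0 := by
    refine fin_three_eq_zero_of_symm_of_sum_eq_zero (fun a c => ?_)
      (fun a => hW.apply_self_left _ _ _) (fun a => ?_)
    · rw [hW.skew_left, hW.skew_right, neg_neg]
    · have hswap : ∀ i, W (e i) (e a) (e a) (e i) = -W (e a) (e i) (e a) (e i) :=
        fun i => hW.skew_left _ _ _ _
      simpa [hswap] using hric a a
  by_cases hab : a = b
  · rw [← hab, hW.skew_left, hsec, neg_zero]
  by_cases hc : c = a ∨ c = b
  · rcases hc with rfl | rfl
    · exact hW.apply_self_left _ _ _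
    · exact hW.apply_self_right _ _ _
  obtain ⟨hca, hcb⟩ := not_or.mp hc
  rw [← hric a b, eq_comm]
  refine Finset.sum_eq_single c (fun m _ hm => ?_) (by simp)
  obtain rfl | rfl : m = a ∨ m = b := by omega
  · exact hW.apply_self_left _ _ _
  · exact hW.apply_self_right _ _ _

theorem apply_eq_zero_of_ricci_eq_zero (hW : IsSkewPairSymmetric W) {e : Fin 3 → M}
    (hric : ∀ j k, ∑ i, W (e i) (e j) (e k) (e i) = 0) (i j k l : Fin 3) :
    W (e i) (e j) (e k) (e l) = 0 := by
  have hR := hW.ricci_component_eq_zero hric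
  by_cases hij : i = j
  · rw [hij]; exact hW.apply_self_left _ _ _
  by_cases hkl : k = l
  · rw [hkl]; exact hW.apply_self_right _ _ _
  obtain rfl | rfl | rfl | rfl : i = k ∨ i = l ∨ j = k ∨ j = l := by omega
  · rw [hW.skew_right, hR, neg_zero]
  · exact hR j k i
  · rw [hW.skew_left, hW.skew_right, neg_neg, hR]
  · rw [hW.skew_left, hR, neg_zero]

end IsSkewPairSymmetric

end

theorem stmt0_general {V : Type*} [NormedAddCommGroup V] [InnerProductSpace ℝ V]
    [FiniteDimensional ℝ V] (hdim : Module.finrank ℝ V = 4)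
    (W : V →ₗ[ℝ] V →ₗ[ℝ] V →ₗ[ℝ] V →ₗ[ℝ] ℝ)
    (hanti1 : ∀ x y z w : V, W x y z w = - W y x z w)
    (hanti2 : ∀ x y z w : V, W x y z w = - W x y w z)
    (hpair : ∀ x y z w : V, W x y z w = W z w x y)
    (htracefree : ∀ (b : OrthonormalBasis (Fin 4) ℝ V) (x y : V),
      ∑ i, W (b i) x y (b i) = 0)
    (v : V) (hv : v ≠ 0) (hWv : ∀ x y z : V, W x y v z = 0) :
    W = 0 := by
  have hW : IsSkewPairSymmetric W := ⟨hanti1, hanti2, hpair⟩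
  obtain ⟨b, hb⟩ := exists_orthonormalBasis_apply_eq (by simpa using hdim) (Fin.last 3)
    (norm_smul_inv_norm (𝕜 := ℝ) hv)
  have hlast : ∀ x y z, W x y (b (Fin.last 3)) z = 0 := by
    intro x y z
    rw [hb]
    simp [hWv]
  refine hW.eq_zero_of_apply_castSucc b.toBasis (by simpa using hlast) fun i j k l => ?_
  simp only [OrthonormalBasis.coe_toBasis]
  refine hW.apply_eq_zero_of_ricci_eq_zero (e := fun i => b i.castSucc) (fun j k => ?_) i j k l
  have htr := htracefree b (b j.castSucc) (b k.castSucc)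
  rwa [Fin.sum_univ_castSucc, hW.apply_first_eq_zero hlast, add_zero] at htr

/-- Eardley et al.: in dimension 4, an algebraic Weyl tensor annihilating a
nonzero vector vanishes identically. -/
theorem stmt0 {V : Type*} [NormedAddCommGroup V] [InnerProductSpace ℝ V]
    [FiniteDimensional ℝ V] (hdim : Module.finrank ℝ V = 4)
    (W : V →ₗ[ℝ] V →ₗ[ℝ] V →ₗ[ℝ] V →ₗ[ℝ] ℝ)
    (hanti1 : ∀ x y z w : V, W x y z w = - W y x z w)
    (hanti2 : ∀ x y z w : V, W x y z w = - W x y w z)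
    (hpair : ∀ x y z w : V, W x y z w = W z w x y)
    (hbianchi : ∀ x y z w : V, W x y z w + W y z x w + W z x y w = 0)
    (htracefree : ∀ (b : OrthonormalBasis (Fin 4) ℝ V) (x y : V),
      ∑ i, W (b i) x y (b i) = 0)
    (v : V) (hv : v ≠ 0) (hWv : ∀ x y z : V, W x y v z = 0) :
    W = 0 :=
  stmt0_general hdim W hanti1 hanti2 hpair htracefree v hv hWv
end

section
/- With the setup of the previous computation (R an algebraic curvature tensor on (V,g), dim V = 2m+1 ≥ 5, R(X,ξ)ξ = X - η(X)ξ, Qξ = 2mξ, W defined by the standard formula): W(X,ξ)ξ = 0 for all X if and only if QX = (r/(2m) - 1)X + (2m + 1 - r/(2m)) η(X)ξ for all X, i.e. the Ricci tensor is η-Einstein. -/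
/-!
The Ricci operator of an algebraic curvature tensor is symmetric, so `Qξ = 2m ξ` gives
`g(QX, ξ) = 2m η(X)`. Substituting this and `R(X,ξ)ξ = X - η(X)ξ` into the formula for `W` yields
`(2m - 1) W(X,ξ)ξ = (r/(2m) - 1) X + (2m + 1 - r/(2m)) η(X) ξ - QX`, so `W(·,ξ)ξ` vanishes exactly
when `Q` is η-Einstein with these coefficients.
-/

open RealInnerProductSpace

section CurvatureAlgebra

variable {V : Type*} [NormedAddCommGroup V] [InnerProductSpace ℝ V]
  {R : V →ₗ[ℝ] V →ₗ[ℝ] V →ₗ[ℝ] V}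

lemma inner_curvature_apply_self_comm
    (hR1 : ∀ x y z w : V, ⟪R x y z, w⟫ = - ⟪R y x z, w⟫)
    (hR2 : ∀ x y z w : V, ⟪R x y z, w⟫ = - ⟪R x y w, z⟫)
    (hR3 : ∀ x y z w : V, ⟪R x y z, w⟫ = ⟪R z w x, y⟫) (u x y : V) :
    ⟪R u x y, u⟫ = ⟪R u y x, u⟫ := by
  rw [hR3 u x y u, hR1 y u u x, hR2 u y u x, neg_neg]

lemma inner_ricci_comm {ι : Type*} [Fintype ι] (b : ι → V) {Q : V →ₗ[ℝ] V}
    (hR1 : ∀ x y z w : V, ⟪R x y z, w⟫ = - ⟪R y x z, w⟫)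
    (hR2 : ∀ x y z w : V, ⟪R x y z, w⟫ = - ⟪R x y w, z⟫)
    (hR3 : ∀ x y z w : V, ⟪R x y z, w⟫ = ⟪R z w x, y⟫)
    (hQ : ∀ x y : V, ⟪Q x, y⟫ = ∑ i, ⟪R (b i) x y, b i⟫) (x y : V) :
    ⟪Q x, y⟫ = ⟪Q y, x⟫ := by
  simp only [hQ, inner_curvature_apply_self_comm hR1 hR2 hR3 _ x y]

/-- Here `c` stands for `2m = dim V - 1`. -/
lemma conformal_apply_xi_xi {Q : V →ₗ[ℝ] V} {W : V → V → V → V} {ξ : V} {c r : ℝ}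
    (hc : c ≠ 0) (hc1 : c - 1 ≠ 0) (hξ : ‖ξ‖ = 1)
    (hK : ∀ X : V, R X ξ ξ = X - ⟪ξ, X⟫ • ξ)
    (hQsymm : ∀ x y : V, ⟪Q x, y⟫ = ⟪Q y, x⟫) (hQξ : Q ξ = c • ξ)
    (hW : ∀ X Y Z : V, W X Y Z = R X Y Z
      + (c - 1)⁻¹ • (⟪Q X, Z⟫ • Y - ⟪Q Y, Z⟫ • X + ⟪X, Z⟫ • Q Y - ⟪Y, Z⟫ • Q X)
      - (r / (c * (c - 1))) • (⟪X, Z⟫ • Y - ⟪Y, Z⟫ • X)) (X : V) :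
    W X ξ ξ = (c - 1)⁻¹ •
      ((r / c - 1) • X + ((c + 1 - r / c) * ⟪ξ, X⟫) • ξ - Q X) := by
  have hξξ : ⟪ξ, ξ⟫ = 1 := by rw [real_inner_self_eq_norm_sq, hξ, one_pow]
  rw [hW, hK, hQsymm, hQξ]
  simp only [real_inner_smul_left, hξξ, real_inner_comm X ξ]
  match_scalars <;> field_simp <;> ring

end CurvatureAlgebra

theorem stmt4_general {V : Type*} [NormedAddCommGroup V] [InnerProductSpace ℝ V]
    (m : ℕ) (hm : 2 ≤ m)
    (b : OrthonormalBasis (Fin (2 * m + 1)) ℝ V)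
    (ξ : V) (hξ : ‖ξ‖ = 1)
    (R : V →ₗ[ℝ] V →ₗ[ℝ] V →ₗ[ℝ] V)
    (hR1 : ∀ x y z w : V, ⟪R x y z, w⟫ = - ⟪R y x z, w⟫)
    (hR2 : ∀ x y z w : V, ⟪R x y z, w⟫ = - ⟪R x y w, z⟫)
    (hR3 : ∀ x y z w : V, ⟪R x y z, w⟫ = ⟪R z w x, y⟫)
    (hK : ∀ X : V, R X ξ ξ = X - ⟪ξ, X⟫ • ξ)
    (Q : V →ₗ[ℝ] V)
    (hQ : ∀ x y : V, ⟪Q x, y⟫ = ∑ i, ⟪R (b i) x y, b i⟫)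
    (hQξ : Q ξ = ((2 * m : ℝ)) • ξ)
    (r : ℝ)
    (W : V → V → V → V)
    (hW : ∀ X Y Z : V, W X Y Z = R X Y Z
      + ((2 * (m : ℝ) - 1))⁻¹ • (⟪Q X, Z⟫ • Y - ⟪Q Y, Z⟫ • X
          + ⟪X, Z⟫ • Q Y - ⟪Y, Z⟫ • Q X)
      - (r / ((2 * (m : ℝ)) * (2 * (m : ℝ) - 1))) • (⟪X, Z⟫ • Y - ⟪Y, Z⟫ • X)) :
    (∀ X : V, W X ξ ξ = 0) ↔
      ∀ X : V, Q X = (r / (2 * (m : ℝ)) - 1) • X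
        + (((2 * (m : ℝ) + 1) - r / (2 * (m : ℝ))) * ⟪ξ, X⟫) • ξ := by
  have hm' : (2 : ℝ) ≤ m := by exact_mod_cast hm
  have hc1 : 2 * (m : ℝ) - 1 ≠ 0 := by linarith
  have key := conformal_apply_xi_xi (by positivity) hc1 hξ hK
    (inner_ricci_comm b hR1 hR2 hR3 hQ) hQξ hW
  refine forall_congr' fun X => ?_
  rw [key, smul_eq_zero_iff_right (inv_ne_zero hc1), sub_eq_zero, eq_comm]

/-- Algebraic core of Proposition 1.1: W(X,ξ)ξ = 0 for all X iff the Ricci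
operator is η-Einstein. -/
theorem stmt4 {V : Type*} [NormedAddCommGroup V] [InnerProductSpace ℝ V]
    [FiniteDimensional ℝ V] (m : ℕ) (hm : 2 ≤ m)
    (hdim : Module.finrank ℝ V = 2 * m + 1)
    (b : OrthonormalBasis (Fin (2 * m + 1)) ℝ V)
    (ξ : V) (hξ : ‖ξ‖ = 1)
    (R : V →ₗ[ℝ] V →ₗ[ℝ] V →ₗ[ℝ] V)
    (hR1 : ∀ x y z w : V, ⟪R x y z, w⟫ = - ⟪R y x z, w⟫)
    (hR2 : ∀ x y z w : V, ⟪R x y z, w⟫ = - ⟪R x y w, z⟫)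
    (hR3 : ∀ x y z w : V, ⟪R x y z, w⟫ = ⟪R z w x, y⟫)
    (hRB : ∀ x y z : V, R x y z + R y z x + R z x y = 0)
    (hK : ∀ X : V, R X ξ ξ = X - ⟪ξ, X⟫ • ξ)
    (Q : V →ₗ[ℝ] V)
    (hQ : ∀ x y : V, ⟪Q x, y⟫ = ∑ i, ⟪R (b i) x y, b i⟫)
    (hQξ : Q ξ = ((2 * m : ℝ)) • ξ)
    (r : ℝ) (hr : r = ∑ i, ⟪Q (b i), b i⟫)
    (W : V → V → V → V)
    (hW : ∀ X Y Z : V, W X Y Z = R X Y Z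
      + ((2 * (m : ℝ) - 1))⁻¹ • (⟪Q X, Z⟫ • Y - ⟪Q Y, Z⟫ • X
          + ⟪X, Z⟫ • Q Y - ⟪Y, Z⟫ • Q X)
      - (r / ((2 * (m : ℝ)) * (2 * (m : ℝ) - 1))) • (⟪X, Z⟫ • Y - ⟪Y, Z⟫ • X)) :
    (∀ X : V, W X ξ ξ = 0) ↔
      ∀ X : V, Q X = (r / (2 * (m : ℝ)) - 1) • X
        + (((2 * (m : ℝ) + 1) - r / (2 * (m : ℝ))) * ⟪ξ, X⟫) • ξ :=
  stmt4_general m hm b ξ hξ R hR1 hR2 hR3 hK Q hQ hQξ r W hW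
end

section
/- Let V be a real inner product space of dimension 2m+1 ≥ 5, ξ a unit vector, η(X) = g(ξ,X), R an algebraic curvature tensor with Ricci operator Q satisfying Qξ = 2mξ and QX = (r/(2m) - 1)X + (2m + 1 - r/(2m)) η(X)ξ where r = tr Q. Let W be the associated Weyl tensor. Then W(X,Y)ξ = R(X,Y)ξ - η(Y)X + η(X)Y for all X, Y. In particular, W(X,Y)ξ = 0 for all X, Y if and only if R(X,Y)ξ = η(Y)X - η(X)Y (the Sasakian curvature condition). -/
open RealInnerProductSpace

/-! For an η-Einstein operator `Q X = a X + b η(X) ξ` the Ricci terms of `W(X,Y)ξ` collapse to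
`(2a + b)(η(X) Y - η(Y) X)`, and with the coefficients of the statement the total coefficient of
`η(X) Y - η(Y) X` in `W(X,Y)ξ - R(X,Y)ξ` is `(2a + b)/(2m - 1) - r/(2m(2m - 1)) = 1`. -/

section EtaEinstein

variable {V : Type*} [NormedAddCommGroup V] [InnerProductSpace ℝ V]
  {ξ : V} {Q : V → V} {a b : ℝ}

theorem inner_apply_eq_of_etaEinstein (hξ : ‖ξ‖ = 1)
    (hQ : ∀ X, Q X = a • X + (b * ⟪ξ, X⟫) • ξ) (X : V) :
    ⟪Q X, ξ⟫ = (a + b) * ⟪X, ξ⟫ := by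
  have hξξ : ⟪ξ, ξ⟫ = 1 := by rw [real_inner_self_eq_norm_sq, hξ, one_pow]
  rw [hQ, inner_add_left, real_inner_smul_left, real_inner_smul_left, hξξ, real_inner_comm ξ X]
  ring

theorem ricciTerms_eq_of_etaEinstein (hξ : ‖ξ‖ = 1)
    (hQ : ∀ X, Q X = a • X + (b * ⟪ξ, X⟫) • ξ) (X Y : V) :
    ⟪Q X, ξ⟫ • Y - ⟪Q Y, ξ⟫ • X + ⟪X, ξ⟫ • Q Y - ⟪Y, ξ⟫ • Q X
      = (2 * a + b) • (⟪X, ξ⟫ • Y - ⟪Y, ξ⟫ • X) := by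
  rw [inner_apply_eq_of_etaEinstein hξ hQ, inner_apply_eq_of_etaEinstein hξ hQ, hQ X, hQ Y,
    real_inner_comm ξ X, real_inner_comm ξ Y]
  module

end EtaEinstein

theorem weylCoefficient_eq_one {m r : ℝ} (hm : 1 < m) :
    (2 * (r / (2 * m) - 1) + ((2 * m + 1) - r / (2 * m))) / (2 * m - 1)
      - r / ((2 * m) * (2 * m - 1)) = 1 := by
  have h2m : 2 * m - 1 ≠ 0 := by linarith
  field_simp
  ring

theorem stmt5_general {V : Type*} [NormedAddCommGroup V] [InnerProductSpace ℝ V]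
    (m : ℕ) (hm : 2 ≤ m)
    (ξ : V) (hξ : ‖ξ‖ = 1)
    (R : V →ₗ[ℝ] V →ₗ[ℝ] V →ₗ[ℝ] V)
    (Q : V →ₗ[ℝ] V)
    (r : ℝ)
    (hQform : ∀ X : V, Q X = (r / (2 * (m : ℝ)) - 1) • X
      + (((2 * (m : ℝ) + 1) - r / (2 * (m : ℝ))) * ⟪ξ, X⟫) • ξ)
    (W : V → V → V → V)
    (hW : ∀ X Y Z : V, W X Y Z = R X Y Z
      + ((2 * (m : ℝ) - 1))⁻¹ • (⟪Q X, Z⟫ • Y - ⟪Q Y, Z⟫ • X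
          + ⟪X, Z⟫ • Q Y - ⟪Y, Z⟫ • Q X)
      - (r / ((2 * (m : ℝ)) * (2 * (m : ℝ) - 1))) • (⟪X, Z⟫ • Y - ⟪Y, Z⟫ • X)) :
    (∀ X Y : V, W X Y ξ = R X Y ξ - ⟪ξ, Y⟫ • X + ⟪ξ, X⟫ • Y) ∧
    ((∀ X Y : V, W X Y ξ = 0) ↔ ∀ X Y : V, R X Y ξ = ⟪ξ, Y⟫ • X - ⟪ξ, X⟫ • Y) := by
  have hm1 : (1 : ℝ) < m := by exact_mod_cast hm
  have hWξ : ∀ X Y : V, W X Y ξ = R X Y ξ - ⟪ξ, Y⟫ • X + ⟪ξ, X⟫ • Y := by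
    intro X Y
    rw [hW, ricciTerms_eq_of_etaEinstein hξ hQform, smul_smul, add_sub_assoc, ← sub_smul,
      ← div_eq_inv_mul, weylCoefficient_eq_one hm1, one_smul, real_inner_comm ξ X,
      real_inner_comm ξ Y]
    abel
  refine ⟨hWξ, ?_⟩
  simp_rw [hWξ, sub_add, sub_eq_zero]

/-- Under the η-Einstein Ricci form, W(X,Y)ξ = R(X,Y)ξ - η(Y)X + η(X)Y; hence
W(X,Y)ξ = 0 for all X,Y iff the Sasakian curvature condition holds. -/
theorem stmt5 {V : Type*} [NormedAddCommGroup V] [InnerProductSpace ℝ V]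
    [FiniteDimensional ℝ V] (m : ℕ) (hm : 2 ≤ m)
    (hdim : Module.finrank ℝ V = 2 * m + 1)
    (ξ : V) (hξ : ‖ξ‖ = 1)
    (R : V →ₗ[ℝ] V →ₗ[ℝ] V →ₗ[ℝ] V)
    (hR1 : ∀ x y z w : V, ⟪R x y z, w⟫ = - ⟪R y x z, w⟫)
    (hR2 : ∀ x y z w : V, ⟪R x y z, w⟫ = - ⟪R x y w, z⟫)
    (hR3 : ∀ x y z w : V, ⟪R x y z, w⟫ = ⟪R z w x, y⟫)
    (hRB : ∀ x y z : V, R x y z + R y z x + R z x y = 0)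
    (Q : V →ₗ[ℝ] V)
    (hQξ : Q ξ = ((2 * m : ℝ)) • ξ)
    (r : ℝ) (hr : r = LinearMap.trace ℝ V Q)
    (hQform : ∀ X : V, Q X = (r / (2 * (m : ℝ)) - 1) • X
      + (((2 * (m : ℝ) + 1) - r / (2 * (m : ℝ))) * ⟪ξ, X⟫) • ξ)
    (W : V → V → V → V)
    (hW : ∀ X Y Z : V, W X Y Z = R X Y Z
      + ((2 * (m : ℝ) - 1))⁻¹ • (⟪Q X, Z⟫ • Y - ⟪Q Y, Z⟫ • X
          + ⟪X, Z⟫ • Q Y - ⟪Y, Z⟫ • Q X)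
      - (r / ((2 * (m : ℝ)) * (2 * (m : ℝ) - 1))) • (⟪X, Z⟫ • Y - ⟪Y, Z⟫ • X)) :
    (∀ X Y : V, W X Y ξ = R X Y ξ - ⟪ξ, Y⟫ • X + ⟪ξ, X⟫ • Y) ∧
    ((∀ X Y : V, W X Y ξ = 0) ↔ ∀ X Y : V, R X Y ξ = ⟪ξ, Y⟫ • X - ⟪ξ, X⟫ • Y) :=
  stmt5_general m hm ξ hξ R Q r hQform W hW
end

section
/- Let V be a real inner product space of dimension 2m+1 ≥ 3, ξ a unit vector with η(X) = g(ξ,X), and let R be an algebraic curvature tensor on V with Ricci operator Q satisfying Ric = a g + b η⊗η for scalars a, b, and suppose W(X,Y)ξ = 0 where W is the Weyl tensor of R. Then R(X,Y)ξ = ((a+b)/(2m))[η(Y)X - η(X)Y] for all X, Y. -/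
/-!
The Ricci condition says `Q = a • id + b • η ⊗ ξ`, so `r = tr Q = (2m+1)a + b`. Setting `Z = ξ` in
the formula for `W`, the Ricci terms collapse to `(2a + b)(η(X)Y - η(Y)X)` because `η(ξ) = 1`, and
`W(X,Y)ξ = 0` leaves `R(X,Y)ξ` a multiple of `η(X)Y - η(Y)X` whose coefficient
`((2m+1)a + b)/(2m(2m-1)) - (2a+b)/(2m-1)` simplifies to `-(a+b)/(2m)`.
-/

open RealInnerProductSpace

section QuasiEinstein

variable {V : Type*} [NormedAddCommGroup V] [InnerProductSpace ℝ V]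
  {Q : V →ₗ[ℝ] V} {ξ : V} {a b : ℝ}

theorem apply_eq_of_inner_apply_eq (hQ : ∀ X Y : V, ⟪Q X, Y⟫ = a * ⟪X, Y⟫ + b * ⟪ξ, X⟫ * ⟪ξ, Y⟫)
    (X : V) : Q X = a • X + (b * ⟪ξ, X⟫) • ξ :=
  ext_inner_right ℝ fun Y => by
    rw [hQ, inner_add_left, real_inner_smul_left, real_inner_smul_left, mul_assoc]

theorem eq_smul_id_add_smul_smulRight
    (hQ : ∀ X Y : V, ⟪Q X, Y⟫ = a * ⟪X, Y⟫ + b * ⟪ξ, X⟫ * ⟪ξ, Y⟫) :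
    Q = a • LinearMap.id + b • (innerₛₗ ℝ ξ).smulRight ξ := by
  ext X
  simp only [apply_eq_of_inner_apply_eq hQ X, LinearMap.add_apply, LinearMap.smul_apply,
    LinearMap.id_apply, LinearMap.smulRight_apply, innerₛₗ_apply_apply, mul_smul]

theorem trace_eq_of_inner_apply_eq [FiniteDimensional ℝ V]
    (hQ : ∀ X Y : V, ⟪Q X, Y⟫ = a * ⟪X, Y⟫ + b * ⟪ξ, X⟫ * ⟪ξ, Y⟫) :
    LinearMap.trace ℝ V Q = a * Module.finrank ℝ V + b * ‖ξ‖ ^ 2 := by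
  rw [eq_smul_id_add_smul_smulRight hQ, map_add, map_smul, map_smul, LinearMap.trace_id,
    LinearMap.trace_smulRight, innerₛₗ_apply_apply, real_inner_self_eq_norm_sq, smul_eq_mul,
    smul_eq_mul]

theorem ricci_terms_at_unit_eq
    (hQ : ∀ X Y : V, ⟪Q X, Y⟫ = a * ⟪X, Y⟫ + b * ⟪ξ, X⟫ * ⟪ξ, Y⟫) (hξ : ‖ξ‖ = 1) (X Y : V) :
    ⟪Q X, ξ⟫ • Y - ⟪Q Y, ξ⟫ • X + ⟪X, ξ⟫ • Q Y - ⟪Y, ξ⟫ • Q X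
      = (2 * a + b) • (⟪ξ, X⟫ • Y - ⟪ξ, Y⟫ • X) := by
  have hξξ : ⟪ξ, ξ⟫ = 1 := by rw [real_inner_self_eq_norm_sq, hξ, one_pow]
  rw [hQ, hQ, apply_eq_of_inner_apply_eq hQ, apply_eq_of_inner_apply_eq hQ, hξξ,
    real_inner_comm X, real_inner_comm Y]
  module

end QuasiEinstein

theorem stmt6_general {V : Type*} [NormedAddCommGroup V] [InnerProductSpace ℝ V]
    [FiniteDimensional ℝ V] (m : ℕ) (hm : 1 ≤ m)
    (hdim : Module.finrank ℝ V = 2 * m + 1)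
    (ξ : V) (hξ : ‖ξ‖ = 1)
    (R : V →ₗ[ℝ] V →ₗ[ℝ] V →ₗ[ℝ] V)
    (Q : V →ₗ[ℝ] V) (a b : ℝ)
    (hQform : ∀ X Y : V, ⟪Q X, Y⟫ = a * ⟪X, Y⟫ + b * ⟪ξ, X⟫ * ⟪ξ, Y⟫)
    (r : ℝ) (hr : r = LinearMap.trace ℝ V Q)
    (W : V → V → V → V)
    (hW : ∀ X Y Z : V, W X Y Z = R X Y Z
      + ((2 * (m : ℝ) - 1))⁻¹ • (⟪Q X, Z⟫ • Y - ⟪Q Y, Z⟫ • X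
          + ⟪X, Z⟫ • Q Y - ⟪Y, Z⟫ • Q X)
      - (r / ((2 * (m : ℝ)) * (2 * (m : ℝ) - 1))) • (⟪X, Z⟫ • Y - ⟪Y, Z⟫ • X))
    (hWξ : ∀ X Y : V, W X Y ξ = 0) :
    ∀ X Y : V, R X Y ξ = ((a + b) / (2 * (m : ℝ))) • (⟪ξ, Y⟫ • X - ⟪ξ, X⟫ • Y) := by
  intro X Y
  have hm_real : (1 : ℝ) ≤ m := by exact_mod_cast hm
  have hr_eq : r = (2 * m + 1) * a + b := by
    rw [hr, trace_eq_of_inner_apply_eq hQform, hdim, hξ]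
    push_cast
    ring
  have hcoeff : ((2 * m + 1) * a + b) / (2 * m * (2 * m - 1)) - (2 * (m : ℝ) - 1)⁻¹ * (2 * a + b)
      = -((a + b) / (2 * m)) := by
    field_simp [show (2 * m - 1 : ℝ) ≠ 0 by linarith]
    ring
  have h := hWξ X Y
  rw [hW, ricci_terms_at_unit_eq hQform hξ, hr_eq, real_inner_comm ξ X, real_inner_comm ξ Y] at h
  calc R X Y ξ = (((2 * m + 1) * a + b) / (2 * m * (2 * m - 1)) - (2 * (m : ℝ) - 1)⁻¹ * (2 * a + b))
        • (⟪ξ, X⟫ • Y - ⟪ξ, Y⟫ • X) := by linear_combination (norm := module) h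
    _ = ((a + b) / (2 * (m : ℝ))) • (⟪ξ, Y⟫ • X - ⟪ξ, X⟫ • Y) := by
      rw [hcoeff, neg_smul, ← smul_neg, neg_sub]

/-- Equation (3.10): quasi-Einstein Ricci with U = ξ plus W(X,Y)ξ = 0 forces
R(X,Y)ξ = ((a+b)/(2m))[η(Y)X - η(X)Y]. -/
theorem stmt6 {V : Type*} [NormedAddCommGroup V] [InnerProductSpace ℝ V]
    [FiniteDimensional ℝ V] (m : ℕ) (hm : 1 ≤ m)
    (hdim : Module.finrank ℝ V = 2 * m + 1)
    (ξ : V) (hξ : ‖ξ‖ = 1)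
    (R : V →ₗ[ℝ] V →ₗ[ℝ] V →ₗ[ℝ] V)
    (hR1 : ∀ x y z w : V, ⟪R x y z, w⟫ = - ⟪R y x z, w⟫)
    (hR2 : ∀ x y z w : V, ⟪R x y z, w⟫ = - ⟪R x y w, z⟫)
    (hR3 : ∀ x y z w : V, ⟪R x y z, w⟫ = ⟪R z w x, y⟫)
    (hRB : ∀ x y z : V, R x y z + R y z x + R z x y = 0)
    (Q : V →ₗ[ℝ] V) (a b : ℝ)
    (hQform : ∀ X Y : V, ⟪Q X, Y⟫ = a * ⟪X, Y⟫ + b * ⟪ξ, X⟫ * ⟪ξ, Y⟫)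
    (r : ℝ) (hr : r = LinearMap.trace ℝ V Q)
    (W : V → V → V → V)
    (hW : ∀ X Y Z : V, W X Y Z = R X Y Z
      + ((2 * (m : ℝ) - 1))⁻¹ • (⟪Q X, Z⟫ • Y - ⟪Q Y, Z⟫ • X
          + ⟪X, Z⟫ • Q Y - ⟪Y, Z⟫ • Q X)
      - (r / ((2 * (m : ℝ)) * (2 * (m : ℝ) - 1))) • (⟪X, Z⟫ • Y - ⟪Y, Z⟫ • X))
    (hWξ : ∀ X Y : V, W X Y ξ = 0) :
    ∀ X Y : V, R X Y ξ = ((a + b) / (2 * (m : ℝ))) • (⟪ξ, Y⟫ • X - ⟪ξ, X⟫ • Y) :=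
  stmt6_general m hm hdim ξ hξ R Q a b hQform r hr W hW hWξ
end

section
/- Let V be a vector space of dimension n ≥ 4 with nondegenerate symmetric bilinear form g, and W an algebraic Weyl tensor (all curvature symmetries plus total trace-freeness). Let U be a vector with g(U,U) = ε ≠ 0 and suppose W(x,y,z,U) = 0 whenever x,y,z are orthogonal to U. Then all components of W involving U are determined by its 'electric part' E(x,y) = W(x,U,U,y): specifically W(x,U,U,y) = W(y,U,U,x), E is trace-free on U^⊥, and if additionally E = 0 then W(X,Y,Z,U) = 0 for all X,Y,Z ∈ V. -/
/-!
Splitting each argument as `x + a • U` with `x ⊥ U`, every term of `W(X, Y, Z, U)` either has all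
of `x, y, z` orthogonal to `U` (zero by hypothesis), is `± W(x, U, U, z)` (the electric part), or
repeats `U` inside an antisymmetric pair.
-/

section Weyl

variable {V : Type*} [AddCommGroup V] [Module ℝ V]

theorem exists_orthogonal_add_smul (g : V →ₗ[ℝ] V →ₗ[ℝ] ℝ) {U : V} (hUU : g U U ≠ 0)
    (X : V) : ∃ x : V, ∃ a : ℝ, g U x = 0 ∧ X = x + a • U :=
  ⟨X - (g U X / g U U) • U, g U X / g U U, by simp [div_mul_cancel₀ _ hUU], by abel⟩

theorem exists_mul_self_mul_eq_one_or_neg_one {ε : ℝ} (hε : ε ≠ 0) :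
    ∃ c : ℝ, c * c * ε = 1 ∨ c * c * ε = -1 := by
  refine ⟨(√|ε|)⁻¹, ?_⟩
  rw [← mul_inv, Real.mul_self_sqrt (abs_nonneg ε)]
  rcases hε.lt_or_gt with hneg | hpos
  · right; rw [abs_of_neg hneg]; field_simp
  · left; rw [abs_of_pos hpos]; field_simp

theorem apply_cons_cons (g : V →ₗ[ℝ] V →ₗ[ℝ] ℝ) (gsymm : ∀ x y : V, g x y = g y x)
    {m : ℕ} {u : V} {s : ℝ} {w : Fin m → V} {δ : Fin m → ℝ} (hu : g u u = s)
    (huw : ∀ j, g u (w j) = 0) (hw : ∀ i j, g (w i) (w j) = if i = j then δ i else 0)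
    (i j : Fin (m + 1)) :
    g ((Fin.cons u w : Fin (m + 1) → V) i) ((Fin.cons u w : Fin (m + 1) → V) j) =
      if i = j then (Fin.cons s δ : Fin (m + 1) → ℝ) i else 0 := by
  cases i using Fin.cases <;> cases j using Fin.cases <;>
    simp [hu, huw, hw, gsymm _ u, Fin.succ_ne_zero, (Fin.succ_ne_zero _).symm]

variable (W : V →ₗ[ℝ] V →ₗ[ℝ] V →ₗ[ℝ] V →ₗ[ℝ] ℝ)

theorem apply_self_left (hanti1 : ∀ x y z w : V, W x y z w = - W y x z w) (x : V) :
    W x x = 0 := by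
  ext z w; have := hanti1 x x z w; simp only [LinearMap.zero_apply]; linarith

theorem apply_self_right (hanti2 : ∀ x y z w : V, W x y z w = - W x y w z) (x y z : V) :
    W x y z z = 0 := by
  have := hanti2 x y z z; linarith

theorem apply_electric_comm (hanti1 : ∀ x y z w : V, W x y z w = - W y x z w)
    (hanti2 : ∀ x y z w : V, W x y z w = - W x y w z)
    (hpair : ∀ x y z w : V, W x y z w = W z w x y) (x u y : V) :
    W x u u y = W y u u x := by
  rw [hpair, hanti1, hanti2, neg_neg]

/-- The trace of `W(·, U, U, ·)` over a frame of `U^⊥` is the full trace, since completing the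
frame by `U / √|g(U, U)|` only adds the vanishing term `W(U, U, U, U)`. -/
theorem sum_electric_eq_zero (g : V →ₗ[ℝ] V →ₗ[ℝ] ℝ) (gsymm : ∀ x y : V, g x y = g y x)
    (hanti1 : ∀ x y z w : V, W x y z w = - W y x z w) {m : ℕ}
    (htracefree : ∀ (e : Fin (m + 1) → V) (εs : Fin (m + 1) → ℝ),
      (∀ i, εs i = 1 ∨ εs i = -1) →
      (∀ i j, g (e i) (e j) = if i = j then εs i else 0) →
      ∀ x y : V, ∑ i, εs i * W (e i) x y (e i) = 0)
    {U : V} (hUU : g U U ≠ 0) (w : Fin m → V) (δ : Fin m → ℝ)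
    (hδ : ∀ i, δ i = 1 ∨ δ i = -1) (horth : ∀ i, g U (w i) = 0)
    (hw : ∀ i j, g (w i) (w j) = if i = j then δ i else 0) :
    ∑ i, δ i * W (w i) U U (w i) = 0 := by
  obtain ⟨c, hc⟩ := exists_mul_self_mul_eq_one_or_neg_one hUU
  have hcU : g (c • U) (c • U) = c * c * g U U := by simp [mul_assoc]
  have hsign : ∀ i, (Fin.cons (c * c * g U U) δ : Fin (m + 1) → ℝ) i = 1 ∨
      (Fin.cons (c * c * g U U) δ : Fin (m + 1) → ℝ) i = -1 :=
    Fin.forall_fin_succ.2 ⟨by simpa using hc, by simpa using hδ⟩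
  have hframe := apply_cons_cons g gsymm hcU (by simp [horth]) hw
  simpa [Fin.sum_univ_succ, apply_self_left W hanti1] using
    htracefree _ _ hsign hframe U U

theorem apply_eq_zero_of_electric_eq_zero (g : V →ₗ[ℝ] V →ₗ[ℝ] ℝ)
    (hanti1 : ∀ x y z w : V, W x y z w = - W y x z w)
    (hanti2 : ∀ x y z w : V, W x y z w = - W x y w z)
    {U : V} (hUU : g U U ≠ 0)
    (hmag : ∀ x y z : V, g U x = 0 → g U y = 0 → g U z = 0 → W x y z U = 0)
    (hE : ∀ x y : V, g U x = 0 → g U y = 0 → W x U U y = 0) (X Y Z : V) :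
    W X Y Z U = 0 := by
  obtain ⟨x, a, hx, rfl⟩ := exists_orthogonal_add_smul g hUU X
  obtain ⟨y, b, hy, rfl⟩ := exists_orthogonal_add_smul g hUU Y
  obtain ⟨z, c, hz, rfl⟩ := exists_orthogonal_add_smul g hUU Z
  have hxUz : W x U z U = 0 := by rw [hanti2, hE x z hx hz, neg_zero]
  have hUyz : W U y z U = 0 := by rw [hanti1, hanti2, hE y z hy hz, neg_zero, neg_zero]
  simp [hmag x y z hx hy hz, hxUz, hUyz, apply_self_left W hanti1,
    apply_self_right W hanti2]

end Weyl

theorem stmt12_general {V : Type*} [AddCommGroup V] [Module ℝ V]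
    (n : ℕ)
    (g : V →ₗ[ℝ] V →ₗ[ℝ] ℝ) (gsymm : ∀ x y : V, g x y = g y x)
    (W : V →ₗ[ℝ] V →ₗ[ℝ] V →ₗ[ℝ] V →ₗ[ℝ] ℝ)
    (hanti1 : ∀ x y z w : V, W x y z w = - W y x z w)
    (hanti2 : ∀ x y z w : V, W x y z w = - W x y w z)
    (hpair : ∀ x y z w : V, W x y z w = W z w x y)
    (htracefree : ∀ (e : Fin n → V) (εs : Fin n → ℝ),
      (∀ i, εs i = 1 ∨ εs i = -1) →
      (∀ i j, g (e i) (e j) = if i = j then εs i else 0) →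
      ∀ x y : V, ∑ i, εs i * W (e i) x y (e i) = 0)
    (U : V) (ε : ℝ) (hε : ε ≠ 0) (hU : g U U = ε)
    (hyp : ∀ x y z : V, g U x = 0 → g U y = 0 → g U z = 0 → W x y z U = 0) :
    (∀ x y : V, g U x = 0 → g U y = 0 → W x U U y = W y U U x) ∧
    (∀ (w : Fin (n - 1) → V) (δ : Fin (n - 1) → ℝ),
      (∀ i, δ i = 1 ∨ δ i = -1) →
      (∀ i, g U (w i) = 0) →
      (∀ i j, g (w i) (w j) = if i = j then δ i else 0) →
      ∑ i, δ i * W (w i) U U (w i) = 0) ∧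
    ((∀ x y : V, g U x = 0 → g U y = 0 → W x U U y = 0) →
      ∀ X Y Z : V, W X Y Z U = 0) := by
  have hUU : g U U ≠ 0 := hU ▸ hε
  refine ⟨fun x y _ _ => apply_electric_comm W hanti1 hanti2 hpair x U y, ?_,
    apply_eq_zero_of_electric_eq_zero W g hanti1 hanti2 hUU hyp⟩
  cases n with
  | zero => intro w δ; simp
  | succ m => exact sum_electric_eq_zero W g gsymm hanti1 htracefree hUU

/-- Linear-algebra lemma on algebraic Weyl tensors: if W(x,y,z,U) = 0 for all
x,y,z ⊥ U (U non-null), then the components of W involving U are governed by the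
electric part E(x,y) = W(x,U,U,y): E is symmetric, trace-free on U^⊥, and E = 0
implies W(X,Y,Z,U) = 0 for all X,Y,Z. -/
theorem stmt12 {V : Type*} [AddCommGroup V] [Module ℝ V]
    (n : ℕ) (hn : 4 ≤ n)
    (g : V →ₗ[ℝ] V →ₗ[ℝ] ℝ) (gsymm : ∀ x y : V, g x y = g y x)
    (gnondeg : ∀ x : V, (∀ y : V, g x y = 0) → x = 0)
    (W : V →ₗ[ℝ] V →ₗ[ℝ] V →ₗ[ℝ] V →ₗ[ℝ] ℝ)
    (hanti1 : ∀ x y z w : V, W x y z w = - W y x z w)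
    (hanti2 : ∀ x y z w : V, W x y z w = - W x y w z)
    (hpair : ∀ x y z w : V, W x y z w = W z w x y)
    (hbianchi : ∀ x y z w : V, W x y z w + W y z x w + W z x y w = 0)
    (htracefree : ∀ (e : Fin n → V) (εs : Fin n → ℝ),
      (∀ i, εs i = 1 ∨ εs i = -1) →
      (∀ i j, g (e i) (e j) = if i = j then εs i else 0) →
      ∀ x y : V, ∑ i, εs i * W (e i) x y (e i) = 0)
    (U : V) (ε : ℝ) (hε : ε ≠ 0) (hU : g U U = ε)
    (hyp : ∀ x y z : V, g U x = 0 → g U y = 0 → g U z = 0 → W x y z U = 0) :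
    (∀ x y : V, g U x = 0 → g U y = 0 → W x U U y = W y U U x) ∧
    (∀ (w : Fin (n - 1) → V) (δ : Fin (n - 1) → ℝ),
      (∀ i, δ i = 1 ∨ δ i = -1) →
      (∀ i, g U (w i) = 0) →
      (∀ i j, g (w i) (w j) = if i = j then δ i else 0) →
      ∑ i, δ i * W (w i) U U (w i) = 0) ∧
    ((∀ x y : V, g U x = 0 → g U y = 0 → W x U U y = 0) →
      ∀ X Y Z : V, W X Y Z U = 0) :=
  stmt12_general n g gsymm W hanti1 hanti2 hpair htracefree U ε hε hU hyp
end
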